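/- Let z̃ be a random variable distributed according to the chi-squared distribution with n degrees of freedom, let ψ ∈ (0,1), β ∈ (0,1), γ > 0, and set z_x = F⁻¹_{χ²(n)}(ψ), z_scale = z_x / (−ln β)^{1/γ}, and f(z) = exp(−(z / z_scale)^γ) for z ≥ 0. Then for any vector u_nom in R^m, the scaled input u := f(z̃) · u_nom satisfies Pr(‖u‖ ≥ β ‖u_nom‖) ≥ ψ, where ‖·‖ is the Euclidean norm. -/

import Mathlib

open MeasureTheory ProbabilityTheory

/-- The chi-squared distribution with `k` degrees of freedom, i.e. the Gamma
distribution with shape `k/2` and rate `1/2`. -/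
noncomputable def chiSquared (k : ℕ) : Measure ℝ :=
  gammaMeasure ((k : ℝ) / 2) (1 / 2)

/-- The quantile function (inverse CDF) of the chi-squared distribution with `k`
degrees of freedom. -/
noncomputable def chiSquaredQuantile (k : ℕ) (q : ℝ) : ℝ :=
  sInf {x : ℝ | q ≤ cdf (chiSquared k) x}

/-!
The gain `exp (-(z / z_scale) ^ γ)` is at least `β` exactly when `(z / z_scale) ^ γ ≤ -log β`,
in particular for `0 ≤ z ≤ z_x`. So the event `‖u‖ ≥ β ‖u_nom‖` contains `{z̃ ≤ z_x}` up to the null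
event `{z̃ < 0}`, and `P(z̃ ≤ z_x) = F(z_x) ≥ ψ` because the cdf `F` is right-continuous.
-/

open Set

/-- Calibrated so that the gain at `zx` is `β`. -/
noncomputable def exponentialGain (β γ zx z : ℝ) : ℝ :=
  Real.exp (-((z / (zx / (-Real.log β) ^ (1 / γ))) ^ γ))

lemma le_exponentialGain {β γ zx z : ℝ} (hβ : β ∈ Ioo (0 : ℝ) 1) (hγ : 0 < γ)
    (hz : 0 ≤ z) (hzx : z ≤ zx) : β ≤ exponentialGain β γ zx z := by
  obtain ⟨hβ0, hβ1⟩ := hβ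
  have hlog : 0 ≤ -Real.log β := neg_nonneg.mpr (Real.log_nonpos hβ0.le hβ1.le)
  set c := (-Real.log β) ^ (1 / γ)
  -- Rewriting `z / (zx / c)` as `(z / zx) * c` also covers `zx = 0`, where both sides are `0`.
  have hratio : z / (zx / c) ≤ c := by
    rw [div_div_eq_mul_div, mul_div_right_comm]
    exact mul_le_of_le_one_left (by positivity) (div_le_one_of_le₀ hzx (hz.trans hzx))
  have hpow : (z / (zx / c)) ^ γ ≤ -Real.log β :=
    calc (z / (zx / c)) ^ γ ≤ c ^ γ :=
          Real.rpow_le_rpow (div_nonneg hz (div_nonneg (hz.trans hzx) (by positivity)))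
            hratio hγ.le
      _ = -Real.log β := by rw [← Real.rpow_mul hlog, one_div_mul_cancel hγ.ne', Real.rpow_one]
  calc β = Real.exp (Real.log β) := (Real.exp_log hβ0).symm
    _ ≤ exponentialGain β γ zx z := Real.exp_le_exp.mpr (by linarith)

lemma ae_nonneg_gammaMeasure (a r : ℝ) : ∀ᵐ x ∂gammaMeasure a r, 0 ≤ x := by
  simp only [ae_iff, not_le]
  change gammaMeasure a r (Iio 0) = 0
  rw [gammaMeasure, withDensity_apply _ measurableSet_Iio]
  exact lintegral_gammaPDF_of_nonpos le_rfl

noncomputable def quantile (ν : Measure ℝ) (q : ℝ) : ℝ :=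
  sInf {x : ℝ | q ≤ cdf ν x}

lemma le_cdf_quantile (ν : Measure ℝ) [IsProbabilityMeasure ν] {q : ℝ} (hq : q < 1) :
    q ≤ cdf ν (quantile ν q) := by
  set S := {x : ℝ | q ≤ cdf ν x}
  have hne : S.Nonempty := ((tendsto_cdf_atTop ν).eventually (eventually_ge_nhds hq)).exists
  -- `S` is an up-set and the cdf is right-continuous, so `S` contains its infimum.
  have hupper : ∀ x, quantile ν q < x → q ≤ cdf ν x := fun x hx => by
    obtain ⟨y, hyS, hyx⟩ := exists_lt_of_csInf_lt hne hx
    exact hyS.trans ((cdf ν).mono hyx.le)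
  exact ge_of_tendsto (((cdf ν).right_continuous _).tendsto.mono_left
    (nhdsWithin_mono _ Ioi_subset_Ici_self)) (eventually_nhdsWithin_of_forall hupper)

theorem exponential_gain_actuation_guarantee_general
    {Ω : Type*} [MeasurableSpace Ω] (μ : Measure Ω) [IsProbabilityMeasure μ]
    {n : ℕ} (ztilde : Ω → ℝ) (hz : Measurable ztilde)
    (hdist : Measure.map ztilde μ = chiSquared n)
    (ψ β γ : ℝ) (hψ : ψ ∈ Set.Ioo (0 : ℝ) 1) (hβ : β ∈ Set.Ioo (0 : ℝ) 1)
    (hγ : 0 < γ)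
    (zx : ℝ) (hzx : zx = chiSquaredQuantile n ψ)
    (zscale : ℝ) (hzscale : zscale = zx / (-Real.log β) ^ (1 / γ))
    (f : ℝ → ℝ) (hf : ∀ z, f z = Real.exp (-((z / zscale) ^ γ)))
    {m : ℕ} (unom : Ω → EuclideanSpace ℝ (Fin m)) :
    ENNReal.ofReal ψ ≤
      μ {ω | β * ‖unom ω‖ ≤ ‖f (ztilde ω) • unom ω‖} := by
  have hf_gain : ∀ z, f z = exponentialGain β γ zx z := fun z => by
    rw [hf, hzscale, exponentialGain]
  have : IsProbabilityMeasure (chiSquared n) :=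
    hdist ▸ Measure.isProbabilityMeasure_map hz.aemeasurable
  have hnonneg : ∀ᵐ ω ∂μ, 0 ≤ ztilde ω :=
    ae_of_ae_map hz.aemeasurable (hdist ▸ ae_nonneg_gammaMeasure _ _)
  have hgain : ∀ ω, 0 ≤ ztilde ω → ztilde ω ≤ zx → β * ‖unom ω‖ ≤ ‖f (ztilde ω) • unom ω‖ := by
    intro ω h0 hle
    rw [norm_smul, Real.norm_of_nonneg (hf_gain _ ▸ (Real.exp_pos _).le), hf_gain]
    exact mul_le_mul_of_nonneg_right (le_exponentialGain hβ hγ h0 hle) (norm_nonneg _)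
  calc ENNReal.ofReal ψ ≤ ENNReal.ofReal (cdf (chiSquared n) zx) :=
        ENNReal.ofReal_le_ofReal (hzx ▸ le_cdf_quantile _ hψ.2)
    _ = μ {ω | ztilde ω ≤ zx} := by
        rw [ofReal_cdf, ← hdist, Measure.map_apply hz measurableSet_Iic]; rfl
    _ ≤ _ := measure_mono_ae (hnonneg.mono fun ω h0 hle => hgain ω h0 hle)

/-- Probabilistic actuation guarantee for the explicit exponential gain law:
if `z̃ ∼ χ²(n)`, `z_x = F⁻¹_{χ²(n)}(ψ)`, `z_scale = z_x / (−ln β)^{1/γ}` and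
`f(z) = exp(−(z / z_scale)^γ)`, then the scaled input `u = f(z̃) • u_nom` satisfies
`‖u‖ ≥ β ‖u_nom‖` with probability at least `ψ`. -/
theorem exponential_gain_actuation_guarantee
    {Ω : Type*} [MeasurableSpace Ω] (μ : Measure Ω) [IsProbabilityMeasure μ]
    {n : ℕ} (hn : 0 < n) (ztilde : Ω → ℝ) (hz : Measurable ztilde)
    (hdist : Measure.map ztilde μ = chiSquared n)
    (ψ β γ : ℝ) (hψ : ψ ∈ Set.Ioo (0 : ℝ) 1) (hβ : β ∈ Set.Ioo (0 : ℝ) 1)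
    (hγ : 0 < γ)
    (zx : ℝ) (hzx : zx = chiSquaredQuantile n ψ)
    (zscale : ℝ) (hzscale : zscale = zx / (-Real.log β) ^ (1 / γ))
    (f : ℝ → ℝ) (hf : ∀ z, f z = Real.exp (-((z / zscale) ^ γ)))
    {m : ℕ} (unom : Ω → EuclideanSpace ℝ (Fin m)) :
    ENNReal.ofReal ψ ≤
      μ {ω | β * ‖unom ω‖ ≤ ‖f (ztilde ω) • unom ω‖} :=
  exponential_gain_actuation_guarantee_general μ ztilde hz hdist ψ β γ hψ hβ hγ zx hzx zscale
    hzscale f hf unom
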